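/- arXiv:1909.02162 — 2 statements merged into one kernel-verified Lean document; each statement's English description precedes it below -/
import Mathlib

section
/- (Lemma 2.10, a property of W^{1,p} functions.) Let p > 1 and let u ∈ W^{1,p}(ℝ) with weak derivative u′, where u denotes the continuous representative. Given ε_1 > 0, there exist a measurable set B ⊆ ℝ consisting of Lebesgue points of u′ and an integer ℓ ≥ 1 such that: (i) ∫_{ℝ∖B} |u′|^p dx ≤ ε_1·∫_ℝ |u′|^p dx; and (ii) for every open interval I′ with length |I′| ≤ 1/ℓ and I′ ∩ B ≠ ∅, and every x ∈ I′ ∩ B, one has (1/|I′|^p)·(1/|I′|)·∫_{I′} |u(y) − u(x) − u′(x)(y − x)|^p dy ≤ ε_1 and |u′(x)|^p ≥ (1 − ε_1)·(1/|I′|)·∫_{I′} |u′(y)|^p dy. -/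
/-!
Write `g` for a Borel representative of `u'`. At almost every `x`, `g` has an `L^p` Lebesgue
point, so on every short interval `I ∋ x` the `p`-mean oscillation `⨍_I |g - g x|^p` is small
compared with `ε₁` and with `|g x|^p`. By the fundamental theorem of calculus and Jensen's
inequality, the first-order Taylor remainder of `u` on `I` is at most `|I|^p` times this
oscillation, and the convexity bound `(s + t)^p ≤ λ^(1-p) s^p + (1-λ)^(1-p) t^p` turns it into the
lower bound on `|u' x|^p`. The admissible length of `I` depends on `x`; testing only intervals
with rational endpoints makes the set of points admitting a given length measurable. These sets
exhaust `{g ≠ 0}` up to a null set, so one of them carries all but an `ε₁`-fraction of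
`∫ |u'|^p`.
-/

open MeasureTheory Filter Topology Set
open scoped ENNReal NNReal

/-- The non-local functional `Λ(u, I)`. -/
noncomputable def Lam (phi : ℝ → ℝ) (p : ℝ) (I : Set ℝ) (u : ℝ → ℝ) : ℝ≥0∞ :=
  ∫⁻ x in I, ∫⁻ y in I, ENNReal.ofReal (phi |u x - u y| / |x - y| ^ (p + 1))

/-- The rescaled functional `Λ_δ(u, I) = δ^p Λ(u/δ, I)`. -/
noncomputable def LamD (phi : ℝ → ℝ) (p δ : ℝ) (I : Set ℝ) (u : ℝ → ℝ) : ℝ≥0∞ :=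
  ENNReal.ofReal (δ ^ p) * Lam phi p I (fun x => u x / δ)

/-- The standing assumptions on `φ`: vanishing at `0`, nonnegative, continuous on `[0,∞)`
except at finitely many points of `(0,∞)` where one-sided limits exist,
`φ(t) ≤ α t^(p+1)` on `[0,1]`, `φ ≤ β`, and the normalization
`∫_0^∞ φ(t) t^(-(p+1)) dt = 1/2`. -/
def PhiOK (phi : ℝ → ℝ) (p α β : ℝ) : Prop :=
  phi 0 = 0 ∧ (∀ t, 0 ≤ t → 0 ≤ phi t) ∧
  (∃ S : Finset ℝ, (↑S : Set ℝ) ⊆ Ioi (0:ℝ) ∧ ContinuousOn phi (Ici 0 \ S) ∧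
    ∀ s ∈ S, (∃ l : ℝ, Tendsto phi (𝓝[<] s) (𝓝 l)) ∧ (∃ l : ℝ, Tendsto phi (𝓝[>] s) (𝓝 l))) ∧
  (∀ t ∈ Icc (0:ℝ) 1, phi t ≤ α * t ^ (p + 1)) ∧
  (∀ t, 0 ≤ t → phi t ≤ β) ∧
  (∫ t in Ioi (0:ℝ), phi t / t ^ (p + 1)) = 1 / 2

/-- `v δ → u` in `L^p(I)` as `δ → 0⁺`, each `v δ` being in `L^p(I)`. -/
def TendstoLp (p : ℝ) (I : Set ℝ) (v : ℝ → ℝ → ℝ) (u : ℝ → ℝ) : Prop :=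
  (∀ δ, 0 < δ → MemLp (v δ) (ENNReal.ofReal p) (volume.restrict I)) ∧
  Tendsto (fun δ => eLpNorm (fun x => v δ x - u x) (ENNReal.ofReal p) (volume.restrict I))
    (𝓝[>] 0) (𝓝 0)

/-- The constant `κ`. -/
noncomputable def kapp (phi : ℝ → ℝ) (p : ℝ) : ℝ≥0∞ :=
  ⨅ (v : ℝ → ℝ → ℝ) (_ : TendstoLp p (Ioo 0 1) v (fun x => x)),
    Filter.liminf (fun δ => LamD phi p δ (Ioo 0 1) (v δ)) (𝓝[>] 0)

/-- The Heaviside-type function `H_{1/2}` on `(0,1)`. -/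
noncomputable def Hhalf : ℝ → ℝ := fun x => if x < 1 / 2 then 0 else 1

/-- The constant `γ` (for `p = 1`). -/
noncomputable def gamm (phi : ℝ → ℝ) (p : ℝ) : ℝ≥0∞ :=
  ⨅ (v : ℝ → ℝ → ℝ) (_ : TendstoLp p (Ioo 0 1) v Hhalf),
    Filter.liminf (fun δ => LamD phi p δ (Ioo 0 1) (v δ)) (𝓝[>] 0)

/-- `t` is a Lebesgue point of `u`. -/
def IsLebesguePoint (u : ℝ → ℝ) (t : ℝ) : Prop :=
  Tendsto (fun r => (1 / (2 * r)) * ∫ y in Ioo (t - r) (t + r), |u y - u t|)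
    (𝓝[>] 0) (𝓝 0)

section
variable {p : ℝ} {g η : ℝ → ℝ}

theorem add_rpow_le_weighted (hp : 1 ≤ p) {l : ℝ} (hl0 : 0 < l) (hl1 : l < 1) {a b : ℝ}
    (ha : 0 ≤ a) (hb : 0 ≤ b) :
    (a + b) ^ p ≤ l ^ (1 - p) * a ^ p + (1 - l) ^ (1 - p) * b ^ p := by
  have hl1' : 0 < 1 - l := by linarith
  have h := (convexOn_rpow hp).2 (mem_Ici.2 (div_nonneg ha hl0.le))
      (mem_Ici.2 (div_nonneg hb hl1'.le)) hl0.le hl1'.le (by ring)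
  have e1 : l • (a / l) + (1 - l) • (b / (1 - l)) = a + b := by
    simp only [smul_eq_mul]
    field_simp
  have e2 : l • ((a / l) ^ p) = l ^ (1 - p) * a ^ p := by
    rw [smul_eq_mul, Real.div_rpow ha hl0.le, Real.rpow_sub hl0, Real.rpow_one]
    field_simp
  have e3 : (1 - l) • ((b / (1 - l)) ^ p) = (1 - l) ^ (1 - p) * b ^ p := by
    rw [smul_eq_mul, Real.div_rpow hb hl1'.le, Real.rpow_sub hl1', Real.rpow_one]
    field_simp
  rwa [e1, e2, e3] at h

theorem abs_rpow_le_weighted (hp : 1 ≤ p) {l : ℝ} (hl0 : 0 < l) (hl1 : l < 1) (y c : ℝ) :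
    |y| ^ p ≤ l ^ (1 - p) * |y - c| ^ p + (1 - l) ^ (1 - p) * |c| ^ p :=
  calc |y| ^ p ≤ (|y - c| + |c|) ^ p := by
        gcongr
        simpa using abs_add_le (y - c) c
    _ ≤ _ := add_rpow_le_weighted hp hl0 hl1 (abs_nonneg _) (abs_nonneg _)

theorem integrableOn_abs_sub_rpow {q : ℝ} (hq : 0 < q) (hqp : q ≤ p)
    (hg : MemLp g (ENNReal.ofReal p) volume) (c : ℝ) {s : Set ℝ} (hs : volume s ≠ ∞) :
    IntegrableOn (fun t => |g t - c| ^ q) s := by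
  have : IsFiniteMeasure (volume.restrict s) :=
    ⟨by rwa [Measure.restrict_apply_univ, lt_top_iff_ne_top]⟩
  have hgq := (hg.restrict s).mono_exponent (ENNReal.ofReal_le_ofReal hqp)
  simpa [IntegrableOn, Real.norm_eq_abs, hq.le] using
    (hgq.sub (memLp_const c)).integrable_norm_rpow'

theorem locallyIntegrable_abs_sub_rpow {q : ℝ} (hq : 0 < q) (hqp : q ≤ p)
    (hg : MemLp g (ENNReal.ofReal p) volume) (c : ℝ) :
    LocallyIntegrable (fun t => |g t - c| ^ q) volume :=
  (locallyIntegrable_iff (X := ℝ)).2 fun _ hk =>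
    integrableOn_abs_sub_rpow hq hqp hg c hk.measure_lt_top.ne

theorem setAverage_closedBall_eq (f : ℝ → ℝ) {x r : ℝ} (hr : 0 < r) :
    ⨍ y in Metric.closedBall x r, f y = 1 / (2 * r) * ∫ y in Ioo (x - r) (x + r), f y := by
  rw [setAverage_eq, Real.volume_real_closedBall hr.le, Real.closedBall_eq_Icc,
    integral_Icc_eq_integral_Ioo, smul_eq_mul, one_div]

theorem setAverage_Ioo_eq (f : ℝ → ℝ) {a b : ℝ} (hab : a ≤ b) :
    ⨍ t in Ioo a b, f t = (b - a)⁻¹ * ∫ t in Ioo a b, f t := by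
  rw [setAverage_eq, Real.volume_real_Ioo_of_le hab, smul_eq_mul]

theorem setAverage_abs_rpow_le_weighted (hp : 1 ≤ p) {l : ℝ} (hl0 : 0 < l) (hl1 : l < 1)
    {s : Set ℝ} (hs0 : volume s ≠ 0) (hs : volume s ≠ ∞) {f : ℝ → ℝ} (c : ℝ)
    (hf : IntegrableOn (fun t => |f t| ^ p) s) (hfc : IntegrableOn (fun t => |f t - c| ^ p) s) :
    ⨍ t in s, |f t| ^ p ≤
      l ^ (1 - p) * (⨍ t in s, |f t - c| ^ p) + (1 - l) ^ (1 - p) * |c| ^ p := by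
  have hvol : 0 < volume.real s := ENNReal.toReal_pos hs0 hs
  have hfc' := hfc.const_mul (l ^ (1 - p))
  have hK := integrableOn_const (C := (1 - l) ^ (1 - p) * |c| ^ p) hs
  have hint := setIntegral_mono hf (hfc'.add hK) fun t => abs_rpow_le_weighted hp hl0 hl1 (f t) c
  rw [Pi.add_def, integral_add hfc' hK, integral_const_mul, setIntegral_const, smul_eq_mul] at hint
  rw [setAverage_eq, setAverage_eq, smul_eq_mul, smul_eq_mul]
  calc (volume.real s)⁻¹ * ∫ t in s, |f t| ^ p
      ≤ (volume.real s)⁻¹ * (l ^ (1 - p) * (∫ t in s, |f t - c| ^ p)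
          + volume.real s * ((1 - l) ^ (1 - p) * |c| ^ p)) := by gcongr
    _ = _ := by field_simp

def IsLpLebesguePoint (p : ℝ) (u : ℝ → ℝ) (x : ℝ) : Prop :=
  Tendsto (fun r => ⨍ y in Metric.closedBall x r, |u y - u x| ^ p) (𝓝[>] 0) (𝓝 0)

theorem IsLpLebesguePoint.isLebesguePoint {x : ℝ} (h : IsLpLebesguePoint 1 g x) :
    IsLebesguePoint g x :=
  h.congr' <| eventually_mem_nhdsWithin.mono fun r hr => by
    rw [setAverage_closedBall_eq _ hr]
    simp only [Real.rpow_one]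

theorem ae_isLpLebesguePoint (hp : 1 ≤ p)
    (hg : ∀ c, LocallyIntegrable (fun t => |g t - c| ^ p) volume) :
    ∀ᵐ x, IsLpLebesguePoint p g x := by
  -- Lebesgue differentiation for every `|g - q| ^ p` with `q` rational, then `q → g x`.
  filter_upwards [ae_all_iff.2 fun q : ℚ =>
    IsUnifLocDoublingMeasure.ae_tendsto_average volume (hg q) 1] with x hx
  set C : ℝ := (1 / 2 : ℝ) ^ (1 - p)
  have hmem : ∀ᶠ r in 𝓝[>] (0 : ℝ), x ∈ Metric.closedBall x (1 * id r) :=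
    eventually_mem_nhdsWithin.mono fun r hr => by simpa using le_of_lt hr
  have hbound : ∀ (q : ℝ) (r : ℝ), 0 < r → ⨍ y in Metric.closedBall x r, |g y - g x| ^ p ≤
      C * (⨍ y in Metric.closedBall x r, |g y - q| ^ p) + C * |q - g x| ^ p := by
    intro q r hr
    have hfin : volume (Metric.closedBall x r) ≠ ∞ := measure_closedBall_lt_top.ne
    have h := setAverage_abs_rpow_le_weighted hp one_half_pos one_half_lt_one
      (Metric.measure_closedBall_pos volume x hr).ne' hfin (q - g x)
      ((hg (g x)).integrableOn_isCompact (isCompact_closedBall x r))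
      (by simpa [sub_sub_sub_cancel_right] using
        (hg q).integrableOn_isCompact (isCompact_closedBall x r))
    rw [show (1 : ℝ) - 1 / 2 = 1 / 2 by norm_num] at h
    simpa [sub_sub_sub_cancel_right, C] using h
  have hp0 : 0 ≤ p := by linarith
  refine tendsto_order.2 ⟨fun a ha => Eventually.of_forall fun r => ha.trans_le ?_, fun ε hε => ?_⟩
  · rw [setAverage_eq]
    exact smul_nonneg (by positivity) (integral_nonneg fun _ => by positivity)
  obtain ⟨q, hq⟩ : ∃ q : ℚ, (q : ℝ) ∈ {c : ℝ | C * |g x - c| ^ p + C * |c - g x| ^ p < ε} := by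
    have hcont : Continuous fun c : ℝ => C * |g x - c| ^ p + C * |c - g x| ^ p := by
      fun_prop (disch := exact Or.inr hp0)
    refine Rat.denseRange_cast.exists_mem_open (isOpen_lt hcont continuous_const) ⟨g x, ?_⟩
    simpa [Real.zero_rpow (by linarith : p ≠ 0)] using hε
  have hlim := ((hx q (fun _ => x) id tendsto_id hmem).const_mul C).add_const
    (C * |(q : ℝ) - g x| ^ p)
  filter_upwards [hlim.eventually (gt_mem_nhds hq), self_mem_nhdsWithin] with r hr hr0
  exact (hbound q r hr0).trans_lt hr

theorem IsLebesguePoint.congr_ae {f : ℝ → ℝ} {x : ℝ} (h : IsLebesguePoint g x)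
    (hfg : f =ᵐ[volume] g) (hx : f x = g x) : IsLebesguePoint f x := by
  refine h.congr fun r => ?_
  congr 1
  refine integral_congr_ae (ae_restrict_of_ae (hfg.mono fun y hy => ?_))
  simp only [hy, hx]

/-- Only intervals with rational endpoints are tested, so that the set is measurable; the slack
in `2 * r` and `η (g x) / 2` pays for passing to real endpoints
(`average_le_of_mem_meanOscBoundSet`). -/
def meanOscBoundSet (p : ℝ) (g η : ℝ → ℝ) (r : ℝ) : Set ℝ :=
  {x | ∀ a b : ℚ, x ∈ Ioo (a : ℝ) b → (b - a : ℝ) ≤ 2 * r →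
    (b - a : ℝ)⁻¹ * ∫ t in Ioo (a : ℝ) b, |g t - g x| ^ p ≤ η (g x) / 2}

theorem measurableSet_meanOscBoundSet (hg : Measurable g) (hη : Measurable η) (r : ℝ) :
    MeasurableSet (meanOscBoundSet p g η r) := by
  have hint : ∀ a b : ℝ, Measurable fun x => ∫ t in Ioo a b, |g t - g x| ^ p := fun a b =>
    (StronglyMeasurable.integral_prod_right (f := fun x t => |g t - g x| ^ p)
      (by fun_prop : Measurable fun z : ℝ × ℝ => |g z.2 - g z.1| ^ p).stronglyMeasurable).measurable
  refine Measurable.setOf (Measurable.forall fun a => Measurable.forall fun b => ?_)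
  exact measurableSet_Ioo.mem.imp (measurable_const.imp
    (measurableSet_le (measurable_const.mul (hint a b)) ((hη.comp hg).div_const 2)).mem)

theorem meanOscBoundSet_antitone : Antitone (meanOscBoundSet p g η) :=
  fun _ _ hrs _ hx a b hxab hlen => hx a b hxab (hlen.trans (by linarith))

theorem average_le_of_mem_meanOscBoundSet {x r : ℝ}
    (hg : LocallyIntegrable (fun t => |g t - g x| ^ p) volume) (hx : x ∈ meanOscBoundSet p g η r)
    {a b : ℝ} (hxab : x ∈ Ioo a b) (hlen : b - a ≤ r) :
    (b - a)⁻¹ * ∫ t in Ioo a b, |g t - g x| ^ p ≤ η (g x) := by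
  have hab : 0 < b - a := by linarith [hxab.1, hxab.2]
  obtain ⟨a', ha'⟩ := exists_rat_btwn (show a - (b - a) / 2 < a by linarith)
  obtain ⟨b', hb'⟩ := exists_rat_btwn (show b < b + (b - a) / 2 by linarith)
  have hlen' : 0 < (b' - a' : ℝ) := by linarith
  have hosc := hx a' b' ⟨by linarith [hxab.1], by linarith [hxab.2]⟩ (by linarith)
  have hmono : ∫ t in Ioo a b, |g t - g x| ^ p ≤ ∫ t in Ioo (a' : ℝ) b', |g t - g x| ^ p :=
    setIntegral_mono_set ((hg.integrableOn_isCompact isCompact_Icc).mono_set Ioo_subset_Icc_self)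
      (Eventually.of_forall fun _ => by positivity)
      (Ioo_subset_Ioo ha'.2.le hb'.1.le).eventuallyLE
  have hpos : 0 ≤ ∫ t in Ioo (a' : ℝ) b', |g t - g x| ^ p := integral_nonneg fun _ => by positivity
  rw [inv_mul_le_iff₀ hlen'] at hosc
  have hη : 0 ≤ η (g x) := by nlinarith
  rw [inv_mul_le_iff₀ hab]
  nlinarith

theorem eventually_mem_meanOscBoundSet {x : ℝ}
    (hg : LocallyIntegrable (fun t => |g t - g x| ^ p) volume) (hx : IsLpLebesguePoint p g x)
    (hη : 0 < η (g x)) : ∀ᶠ r in 𝓝[>] 0, x ∈ meanOscBoundSet p g η r := by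
  obtain ⟨δ, hδ, hsmall⟩ := mem_nhdsGT_iff_exists_Ioo_subset.1
    (hx.eventually (gt_mem_nhds (by positivity : 0 < η (g x) / 4)))
  filter_upwards [Ioo_mem_nhdsGT (half_pos hδ)] with r hr a b hxab hlen
  set L : ℝ := b - a
  have hL : 0 < L := by simp only [L]; linarith [hxab.1, hxab.2]
  have hball : ⨍ y in Metric.closedBall x L, |g y - g x| ^ p < η (g x) / 4 :=
    hsmall ⟨hL, by linarith [hr.2]⟩
  rw [setAverage_eq, Real.volume_real_closedBall hL.le, smul_eq_mul,
    inv_mul_lt_iff₀ (by positivity)] at hball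
  have hmono : ∫ t in Ioo (a : ℝ) b, |g t - g x| ^ p ≤
      ∫ t in Metric.closedBall x L, |g t - g x| ^ p := by
    refine setIntegral_mono_set (hg.integrableOn_isCompact (isCompact_closedBall x L))
      (Eventually.of_forall fun _ => by positivity) (Eventually.of_forall fun t ht => ?_)
    rw [Real.closedBall_eq_Icc]
    exact ⟨by linarith [ht.1, hxab.2], by linarith [ht.2, hxab.1]⟩
  rw [inv_mul_le_iff₀ hL]
  linarith

theorem exists_setIntegral_compl_le_mul {α : Type*} [MeasurableSpace α] {μ : Measure α}
    {f : α → ℝ} (hf : Integrable f μ) (hf0 : 0 ≤ f) {S : ℕ → Set α}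
    (hS : ∀ n, MeasurableSet (S n)) (hmono : Monotone S) (hfS : ∀ᵐ x ∂μ, x ∉ ⋃ n, S n → f x = 0)
    {ε : ℝ} (hε : 0 < ε) : ∃ n, ∫ x in (S n)ᶜ, f x ∂μ ≤ ε * ∫ x, f x ∂μ := by
  have hlim : Tendsto (fun n => ∫ x in (S n)ᶜ, f x ∂μ) atTop (𝓝 0) := by
    have := tendsto_setIntegral_of_antitone (fun n => (hS n).compl)
      (fun _ _ h => compl_subset_compl.2 (hmono h)) ⟨0, hf.integrableOn⟩
    rwa [← compl_iUnion, setIntegral_eq_zero_of_ae_eq_zero (t := (⋃ n, S n)ᶜ) hfS] at this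
  rcases (integral_nonneg (μ := μ) hf0).eq_or_lt with h0 | hpos
  · refine ⟨0, ?_⟩
    rw [← h0, mul_zero, h0]
    exact setIntegral_le_integral hf (Eventually.of_forall hf0)
  · exact (hlim.eventually (gt_mem_nhds (mul_pos hε hpos))).exists.imp fun _ => le_of_lt

theorem exists_measurableSet_meanOsc_le (hp : 1 ≤ p) (hgm : Measurable g)
    (hg : MemLp g (ENNReal.ofReal p) volume) (hηm : Measurable η) (hη : ∀ c, c ≠ 0 → 0 < η c)
    {ε : ℝ} (hε : 0 < ε) :
    ∃ (B : Set ℝ) (ℓ : ℕ), MeasurableSet B ∧ (∀ x ∈ B, IsLebesguePoint g x) ∧ 1 ≤ ℓ ∧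
      ∫ x in Bᶜ, |g x| ^ p ≤ ε * ∫ x, |g x| ^ p ∧
      ∀ x ∈ B, ∀ a b, x ∈ Ioo a b → b - a ≤ 1 / (ℓ : ℝ) →
        (b - a)⁻¹ * ∫ t in Ioo a b, |g t - g x| ^ p ≤ η (g x) := by
  have hp0 : 0 < p := by linarith
  have hloc := locallyIntegrable_abs_sub_rpow hp0 le_rfl hg
  set N := toMeasurable volume {x | ¬(IsLpLebesguePoint p g x ∧ IsLpLebesguePoint 1 g x)}
  have hN : volume N = 0 := by
    rw [measure_toMeasurable]
    exact ae_iff.1 ((ae_isLpLebesguePoint hp hloc).and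
      (ae_isLpLebesguePoint le_rfl (locallyIntegrable_abs_sub_rpow one_pos hp hg)))
  have hgood : ∀ x ∉ N, IsLpLebesguePoint p g x ∧ IsLpLebesguePoint 1 g x :=
    fun x hx => not_not.1 fun h => hx (subset_toMeasurable _ _ h)
  set S : ℕ → Set ℝ := fun n => (Nᶜ ∩ g ⁻¹' {0}ᶜ) ∩ meanOscBoundSet p g η (1 / (n + 1))
  have hSm : ∀ n, MeasurableSet (S n) := fun n =>
    ((measurableSet_toMeasurable _ _).compl.inter (hgm (measurableSet_singleton 0).compl)).inter
      (measurableSet_meanOscBoundSet hgm hηm _)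
  have hSmono : Monotone S := fun m n hmn =>
    inter_subset_inter_right _ (meanOscBoundSet_antitone (by gcongr))
  have hcover : ∀ᵐ x, x ∉ ⋃ n, S n → |g x| ^ p = 0 := by
    filter_upwards [measure_eq_zero_iff_ae_notMem.1 hN] with x hxN hxS
    by_contra hne
    have hgx : g x ≠ 0 := fun h => hne (by simp [h, Real.zero_rpow hp0.ne'])
    have hr : Tendsto (fun n : ℕ => 1 / ((n : ℝ) + 1)) atTop (𝓝[>] 0) :=
      tendsto_nhdsWithin_of_tendsto_nhds_of_eventually_within _
        tendsto_one_div_add_atTop_nhds_zero_nat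
        (Eventually.of_forall fun _ => mem_Ioi.2 Nat.one_div_pos_of_nat)
    obtain ⟨n, hn⟩ :=
      (hr.eventually (eventually_mem_meanOscBoundSet (hloc _) (hgood x hxN).1 (hη _ hgx))).exists
    exact hxS (mem_iUnion.2 ⟨n, ⟨hxN, hgx⟩, hn⟩)
  have hint : Integrable (fun x => |g x| ^ p) := by
    simpa [Real.norm_eq_abs, hp0.le] using
      hg.integrable_norm_rpow (by simpa using hp0) ENNReal.ofReal_ne_top
  obtain ⟨n, hn⟩ := exists_setIntegral_compl_le_mul hint (fun _ => by dsimp; positivity) hSm hSmono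
    hcover hε
  refine ⟨S n, n + 1, hSm n, fun x hx => (hgood x hx.1.1).2.isLebesguePoint, by omega, hn,
    fun x hx a b hxab hlen => average_le_of_mem_meanOscBoundSet (hloc _) hx.2 hxab ?_⟩
  simpa using hlen

theorem sub_eq_intervalIntegral {u : ℝ → ℝ} (hFTC : ∀ x y, x ≤ y → u y - u x = ∫ t in x..y, g t)
    (x y : ℝ) : u y - u x = ∫ t in x..y, g t := by
  rcases le_total x y with h | h
  · exact hFTC x y h
  · rw [intervalIntegral.integral_symm, ← hFTC y x h, neg_sub]

theorem abs_taylor_remainder_le (hg : LocallyIntegrable g volume) {u : ℝ → ℝ}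
    (hFTC : ∀ x y, x ≤ y → u y - u x = ∫ t in x..y, g t) {a b x y : ℝ} (hx : x ∈ Ioo a b)
    (hy : y ∈ Ioo a b) : |u y - u x - g x * (y - x)| ≤ ∫ t in Ioo a b, |g t - g x| := by
  have hrem : u y - u x - g x * (y - x) = ∫ t in x..y, (g t - g x) := by
    have hgxy : IntervalIntegrable g volume x y := intervalIntegrable_iff.2
      ((hg.integrableOn_isCompact isCompact_uIcc).mono_set uIoc_subset_uIcc)
    rw [intervalIntegral.integral_sub hgxy intervalIntegrable_const,
      intervalIntegral.integral_const, smul_eq_mul, sub_eq_intervalIntegral hFTC]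
    ring
  have hsub : uIoc x y ⊆ Ioo a b := fun t ht =>
    ⟨(lt_min hx.1 hy.1).trans ht.1, ht.2.trans_lt (max_lt hx.2 hy.2)⟩
  rw [hrem]
  calc |∫ t in x..y, (g t - g x)| ≤ ∫ t in uIoc x y, |g t - g x| :=
        intervalIntegral.norm_integral_le_integral_norm_uIoc (f := fun t => g t - g x)
    _ ≤ ∫ t in Ioo a b, |g t - g x| :=
        setIntegral_mono_set
          (((hg.integrableOn_isCompact isCompact_Icc).mono_set Ioo_subset_Icc_self).sub
            (integrableOn_const (by simp))).abs
          (Eventually.of_forall fun _ => abs_nonneg _) hsub.eventuallyLE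

theorem taylor_remainder_rpow_le (hp : 1 ≤ p) (hg : MemLp g (ENNReal.ofReal p) volume)
    {u : ℝ → ℝ} (hFTC : ∀ x y, x ≤ y → u y - u x = ∫ t in x..y, g t) {a b x : ℝ}
    (hx : x ∈ Ioo a b) :
    1 / (b - a) ^ p * ((b - a)⁻¹ * ∫ y in Ioo a b, |u y - u x - g x * (y - x)| ^ p) ≤
      (b - a)⁻¹ * ∫ t in Ioo a b, |g t - g x| ^ p := by
  have hab : a < b := hx.1.trans hx.2
  have hba : 0 < b - a := sub_pos.2 hab
  have hp0 : 0 < p := by linarith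
  have hfin : volume (Ioo a b) ≠ ∞ := by simp [Real.volume_Ioo]
  have hint : IntegrableOn (fun t => |g t - g x|) (Ioo a b) := by
    simpa using integrableOn_abs_sub_rpow one_pos hp hg (g x) hfin
  set M := ⨍ t in Ioo a b, |g t - g x|
  have hM : 0 ≤ M := by
    simp only [M]
    rw [setAverage_Ioo_eq _ hab.le]
    exact mul_nonneg (by positivity) (integral_nonneg fun _ => abs_nonneg _)
  have hjensen : M ^ p ≤ ⨍ t in Ioo a b, |g t - g x| ^ p :=
    (convexOn_rpow hp).map_set_average_le (continuousOn_id.rpow_const fun _ _ => Or.inr hp0.le)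
      isClosed_Ici (by simp [Real.volume_Ioo, hab]) hfin
      (Eventually.of_forall fun _ => mem_Ici.2 (abs_nonneg _)) hint
      (integrableOn_abs_sub_rpow hp0 le_rfl hg (g x) hfin)
  have hpt : ∀ y ∈ Ioo a b, ‖|u y - u x - g x * (y - x)| ^ p‖ ≤ ((b - a) * M) ^ p := by
    intro y hy
    rw [Real.norm_of_nonneg (by positivity)]
    gcongr
    simp only [M]
    rw [setAverage_Ioo_eq _ hab.le, mul_inv_cancel_left₀ hba.ne']
    exact abs_taylor_remainder_le (hg.locallyIntegrable (by simpa using hp)) hFTC hx hy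
  have hbound := norm_setIntegral_le_of_norm_le_const hfin.lt_top hpt
  rw [Real.volume_real_Ioo_of_le hab.le, Real.norm_eq_abs] at hbound
  calc 1 / (b - a) ^ p * ((b - a)⁻¹ * ∫ y in Ioo a b, |u y - u x - g x * (y - x)| ^ p)
      ≤ 1 / (b - a) ^ p * ((b - a)⁻¹ * (((b - a) * M) ^ p * (b - a))) := by
        gcongr
        exact (le_abs_self _).trans hbound
    _ = M ^ p := by
        rw [Real.mul_rpow hba.le hM]
        field_simp
    _ ≤ ⨍ t in Ioo a b, |g t - g x| ^ p := hjensen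
    _ = (b - a)⁻¹ * ∫ t in Ioo a b, |g t - g x| ^ p := setAverage_Ioo_eq _ hab.le

theorem one_sub_mul_average_rpow_le_of_meanOsc_le (hp : 1 ≤ p)
    (hg : MemLp g (ENNReal.ofReal p) volume) {ε l θ : ℝ} (hl0 : 0 < l) (hl1 : l < 1)
    (hconst : (1 - ε) * (l ^ (1 - p) * θ + (1 - l) ^ (1 - p)) ≤ 1) {a b x : ℝ} (hab : a < b)
    (hosc : (b - a)⁻¹ * ∫ t in Ioo a b, |g t - g x| ^ p ≤ θ * |g x| ^ p) :
    (1 - ε) * ((b - a)⁻¹ * ∫ t in Ioo a b, |g t| ^ p) ≤ |g x| ^ p := by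
  have hp0 : 0 < p := by linarith
  have hfin : volume (Ioo a b) ≠ ∞ := by simp [Real.volume_Ioo]
  have hsplit := setAverage_abs_rpow_le_weighted hp hl0 hl1 (by simp [Real.volume_Ioo, hab]) hfin
    (g x) (by simpa using integrableOn_abs_sub_rpow hp0 le_rfl hg 0 hfin)
    (integrableOn_abs_sub_rpow hp0 le_rfl hg (g x) hfin)
  rw [setAverage_Ioo_eq _ hab.le, setAverage_Ioo_eq _ hab.le] at hsplit
  set A := (b - a)⁻¹ * ∫ t in Ioo a b, |g t| ^ p
  have hA : 0 ≤ A := mul_nonneg (inv_nonneg.2 (sub_pos.2 hab).le)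
    (integral_nonneg fun _ => by positivity)
  have hY : 0 ≤ |g x| ^ p := by positivity
  have hAY : A ≤ (l ^ (1 - p) * θ + (1 - l) ^ (1 - p)) * |g x| ^ p := by
    have := mul_le_mul_of_nonneg_left hosc (Real.rpow_pos_of_pos hl0 (1 - p)).le
    linarith
  rcases le_total 0 (1 - ε) with hε | hε
  · nlinarith [mul_le_mul_of_nonneg_left hAY hε]
  · nlinarith

theorem exists_weight_and_threshold (p : ℝ) {ε : ℝ} (hε : 0 < ε) :
    ∃ l θ : ℝ, 0 < l ∧ l < 1 ∧ 0 < θ ∧ (1 - ε) * (l ^ (1 - p) * θ + (1 - l) ^ (1 - p)) < 1 := by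
  have hl : Tendsto (fun l : ℝ => (1 - ε) * (1 - l) ^ (1 - p)) (𝓝[>] 0) (𝓝 (1 - ε)) := by
    have : ContinuousAt (fun l : ℝ => (1 - ε) * (1 - l) ^ (1 - p)) 0 := by
      apply ContinuousAt.mul continuousAt_const
      exact (continuousAt_const.sub continuousAt_id).rpow_const (Or.inl (by norm_num))
    simpa using this.tendsto.mono_left nhdsWithin_le_nhds
  obtain ⟨l, ⟨hl1, hlt⟩, hl0⟩ := ((hl.eventually (gt_mem_nhds (by linarith : 1 - ε < 1))).and
    (Ioo_mem_nhdsGT one_pos)).and self_mem_nhdsWithin |>.exists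
  have hθ : Tendsto (fun θ : ℝ => (1 - ε) * (l ^ (1 - p) * θ + (1 - l) ^ (1 - p))) (𝓝[>] 0)
      (𝓝 ((1 - ε) * (1 - l) ^ (1 - p))) := by
    have : Continuous (fun θ : ℝ => (1 - ε) * (l ^ (1 - p) * θ + (1 - l) ^ (1 - p))) := by
      fun_prop
    simpa using this.continuousAt (x := 0) |>.tendsto.mono_left nhdsWithin_le_nhds
  obtain ⟨θ, hθ1, hθ0⟩ := ((hθ.eventually (gt_mem_nhds hl1)).and self_mem_nhdsWithin).exists
  exact ⟨l, θ, hl0, hlt.2, hθ0, hθ1⟩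

end

theorem lemma_2_10_general (p : ℝ) (hp : 1 < p)
    (u u' : ℝ → ℝ)
    (hu' : MemLp u' (ENNReal.ofReal p) volume)
    (hFTC : ∀ x y : ℝ, x ≤ y → u y - u x = ∫ t in x..y, u' t)
    (ε1 : ℝ) (hε1 : 0 < ε1) :
    ∃ (B : Set ℝ) (ℓ : ℕ), MeasurableSet B ∧ (∀ x ∈ B, IsLebesguePoint u' x) ∧ 1 ≤ ℓ ∧
      (∫ x in Bᶜ, |u' x| ^ p) ≤ ε1 * ∫ x : ℝ, |u' x| ^ p ∧
      ∀ a b : ℝ, a < b → b - a ≤ 1 / (ℓ : ℝ) → (Ioo a b ∩ B).Nonempty →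
        ∀ x ∈ Ioo a b ∩ B,
          (1 / (b - a) ^ p) *
              ((b - a)⁻¹ * ∫ y in Ioo a b, |u y - u x - u' x * (y - x)| ^ p) ≤ ε1 ∧
          (1 - ε1) * ((b - a)⁻¹ * ∫ y in Ioo a b, |u' y| ^ p) ≤ |u' x| ^ p := by
  obtain ⟨g, hgm, hu'g⟩ : ∃ g, Measurable g ∧ u' =ᵐ[volume] g :=
    ⟨_, hu'.1.aemeasurable.measurable_mk, hu'.1.aemeasurable.ae_eq_mk⟩
  have hg := hu'.ae_eq hu'g
  have hFTCg : ∀ x y, x ≤ y → u y - u x = ∫ t in x..y, g t := fun x y hxy =>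
    (hFTC x y hxy).trans (intervalIntegral.integral_congr_ae (hu'g.mono fun _ h _ => h))
  have habs : (fun x => |u' x| ^ p) =ᵐ[volume] fun x => |g x| ^ p :=
    hu'g.fun_comp fun c => |c| ^ p
  obtain ⟨l, θ, hl0, hl1, hθ, hconst⟩ := exists_weight_and_threshold p hε1
  obtain ⟨B, ℓ, hBm, hBleb, hℓ, hBc, hBosc⟩ := exists_measurableSet_meanOsc_le hp.le hgm hg
    (η := fun c => min ε1 (θ * |c| ^ p)) (by fun_prop)
    (fun c hc => lt_min hε1 (mul_pos hθ (Real.rpow_pos_of_pos (abs_pos.2 hc) p))) hε1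
  set T := toMeasurable volume {x | u' x ≠ g x}
  have hT : volume T = 0 := by rw [measure_toMeasurable]; exact hu'g
  have hTc : ∀ x ∉ T, u' x = g x := fun x hx => not_not.1 fun h => hx (subset_toMeasurable _ _ h)
  refine ⟨B \ T, ℓ, hBm.diff (measurableSet_toMeasurable _ _),
    fun x hx => (hBleb x hx.1).congr_ae hu'g (hTc x hx.2), hℓ, ?_, ?_⟩
  · rw [setIntegral_congr_set (sdiff_null_ae_eq_self hT).compl, integral_congr_ae habs,
      integral_congr_ae (ae_restrict_of_ae habs)]
    exact hBc
  rintro a b hab hlen - x ⟨hxab, hxB, hxT⟩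
  have hosc := hBosc x hxB a b hxab hlen
  rw [hTc x hxT, integral_congr_ae (ae_restrict_of_ae habs)]
  exact ⟨(taylor_remainder_rpow_le hp.le hg hFTCg hxab).trans (hosc.trans (min_le_left _ _)),
    one_sub_mul_average_rpow_le_of_meanOsc_le hp.le hg hl0 hl1 hconst.le hab
      (hosc.trans (min_le_right _ _))⟩

/-- Lemma 2.10, a property of `W^{1,p}` functions. -/
theorem lemma_2_10 (p : ℝ) (hp : 1 < p)
    (u u' : ℝ → ℝ)
    (hu : MemLp u (ENNReal.ofReal p) volume)
    (hu' : MemLp u' (ENNReal.ofReal p) volume)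
    (hFTC : ∀ x y : ℝ, x ≤ y → u y - u x = ∫ t in x..y, u' t)
    (ε1 : ℝ) (hε1 : 0 < ε1) :
    ∃ (B : Set ℝ) (ℓ : ℕ), MeasurableSet B ∧ (∀ x ∈ B, IsLebesguePoint u' x) ∧ 1 ≤ ℓ ∧
      (∫ x in Bᶜ, |u' x| ^ p) ≤ ε1 * ∫ x : ℝ, |u' x| ^ p ∧
      ∀ a b : ℝ, a < b → b - a ≤ 1 / (ℓ : ℝ) → (Ioo a b ∩ B).Nonempty →
        ∀ x ∈ Ioo a b ∩ B,
          (1 / (b - a) ^ p) *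
              ((b - a)⁻¹ * ∫ y in Ioo a b, |u y - u x - u' x * (y - x)| ^ p) ≤ ε1 ∧
          (1 - ε1) * ((b - a)⁻¹ * ∫ y in Ioo a b, |u' y| ^ p) ≤ |u' x| ^ p :=
  lemma_2_10_general p hp u u' hu' hFTC ε1 hε1
end

section
/- (Claim 2, scaled lower bound near an affine function.) Let p ≥ 1. For every ε > 0 there exist positive constants δ̂_1 and δ̂_2 such that for every c, d ∈ ℝ, every bounded open interval I′ ⊆ ℝ of length |I′| > 0, and every f ∈ L^p(I′) satisfying (1/|I′|)·∫_{I′} |f(y) − (c·y + d)|^p dy < δ̂_1·|c|^p·|I′|^p, one has Λ_δ(f, I′) ≥ (κ − ε)·|c|^p·|I′| for every δ ∈ (0, δ̂_2·|c|·|I′|). -/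
open MeasureTheory Filter Topology Set
open scoped ENNReal NNReal

/-!
The affine change of variables taking `(a, b)` to `(0, 1)` and `c y + d` to the identity
multiplies `Λ_δ` by `|c|^p (b - a)` and replaces `δ` by `δ / (|c| (b - a))`, while the
`L^p`-closeness hypothesis becomes `L^p`-closeness to the identity on `(0, 1)`. So if the claim
failed for some `ε`, there would be scales `δ_n → 0` and functions `v_n → id` in `L^p(0, 1)` with
`Λ_{δ_n}(v_n) < κ - ε`; gluing them into one family indexed by `δ` contradicts the definition of
`κ`, which is finite: the normalization of `φ` gives `Λ_δ(id) ≤ 1`.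
-/

lemma measurableEmbedding_affine (a : ℝ) {L : ℝ} (hL : L ≠ 0) :
    MeasurableEmbedding (fun s : ℝ => a + L * s) :=
  (MeasurableEquiv.addLeft a).measurableEmbedding.comp
    (MeasurableEquiv.mulLeft₀ L hL).measurableEmbedding

lemma map_volume_affine (a : ℝ) {L : ℝ} (hL : L ≠ 0) :
    (volume : Measure ℝ).map (fun s => a + L * s) = ENNReal.ofReal |L⁻¹| • volume := by
  rw [show (fun s : ℝ => a + L * s) = (a + ·) ∘ (L * ·) from rfl,
    ← Measure.map_map (measurable_const_add a) (measurable_const_mul L),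
    Real.map_volume_mul_left hL, Measure.map_smul, map_add_left_eq_self]

lemma map_volume_restrict_Ioo_affine {a b : ℝ} (hab : a < b) :
    (volume.restrict (Ioo 0 1)).map (fun s => a + (b - a) * s)
      = ENNReal.ofReal (b - a)⁻¹ • volume.restrict (Ioo a b) := by
  have hL : 0 < b - a := sub_pos.2 hab
  have hpre : (fun s => a + (b - a) * s) ⁻¹' Ioo a b = Ioo 0 1 := by
    ext s
    simp only [mem_preimage, mem_Ioo]
    constructor
    · rintro ⟨h1, h2⟩
      exact ⟨pos_of_mul_pos_right (by linarith) hL.le, by nlinarith⟩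
    · rintro ⟨h1, h2⟩
      constructor <;> nlinarith
  rw [← hpre, ← (measurableEmbedding_affine a hL.ne').restrict_map, map_volume_affine a hL.ne',
    Measure.restrict_smul, abs_of_pos (inv_pos.2 hL)]

lemma lintegral_comp_affine (a : ℝ) {L : ℝ} (hL : L ≠ 0) (g : ℝ → ℝ≥0∞) :
    ∫⁻ s, g (a + L * s) = ENNReal.ofReal |L⁻¹| * ∫⁻ y, g y := by
  rw [← (measurableEmbedding_affine a hL).lintegral_map, map_volume_affine a hL,
    lintegral_smul_measure, smul_eq_mul]

lemma setLIntegral_Ioo_comp_affine {a b : ℝ} (hab : a < b) (g : ℝ → ℝ≥0∞) :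
    ∫⁻ s in Ioo 0 1, g (a + (b - a) * s) = ENNReal.ofReal (b - a)⁻¹ * ∫⁻ y in Ioo a b, g y := by
  rw [← (measurableEmbedding_affine a (sub_pos.2 hab).ne').lintegral_map,
    map_volume_restrict_Ioo_affine hab, lintegral_smul_measure, smul_eq_mul]

lemma setIntegral_Ioo_comp_affine {a b : ℝ} (hab : a < b) (g : ℝ → ℝ) :
    ∫ s in Ioo 0 1, g (a + (b - a) * s) = (b - a)⁻¹ * ∫ y in Ioo a b, g y := by
  rw [← (measurableEmbedding_affine a (sub_pos.2 hab).ne').integral_map,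
    map_volume_restrict_Ioo_affine hab, integral_smul_measure, smul_eq_mul,
    ENNReal.toReal_ofReal (inv_nonneg.2 (sub_pos.2 hab).le)]

lemma MeasureTheory.MemLp.comp_affine_Ioo {q : ℝ≥0∞} {a b : ℝ} (hab : a < b) {g : ℝ → ℝ}
    (hg : MemLp g q (volume.restrict (Ioo a b))) :
    MemLp (fun s => g (a + (b - a) * s)) q (volume.restrict (Ioo 0 1)) := by
  refine (measurableEmbedding_affine a (sub_pos.2 hab).ne').memLp_map_measure_iff.1 ?_
  rw [map_volume_restrict_Ioo_affine hab]
  exact hg.smul_measure ENNReal.ofReal_ne_top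

lemma lintegral_phi_abs_div_rpow_eq_one {phi : ℝ → ℝ} {p : ℝ} (hnn : ∀ t, 0 ≤ t → 0 ≤ phi t)
    (hnorm : ∫ t in Ioi (0:ℝ), phi t / t ^ (p + 1) = 1 / 2) :
    ∫⁻ z, ENNReal.ofReal (phi |z| / |z| ^ (p + 1)) = 1 := by
  have h : ∫ z, phi |z| / |z| ^ (p + 1) = 1 := by
    rw [integral_comp_abs (f := fun t => phi t / t ^ (p + 1)), hnorm]
    norm_num
  rw [← ofReal_integral_eq_lintegral_ofReal (Integrable.of_integral_ne_zero (by simp [h]))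
      (ae_of_all _ fun z => div_nonneg (hnn _ (abs_nonneg z)) (by positivity)), h,
    ENNReal.ofReal_one]

lemma lintegral_lam_kernel_id (phi : ℝ → ℝ) (p : ℝ) {δ : ℝ} (hδ : 0 < δ) (x : ℝ) :
    ∫⁻ y, ENNReal.ofReal (phi |x / δ - y / δ| / |x - y| ^ (p + 1))
      = ENNReal.ofReal (δ ^ (-p)) * ∫⁻ z, ENNReal.ofReal (phi |z| / |z| ^ (p + 1)) := by
  have hsub : ∀ z, ENNReal.ofReal (phi |x / δ - (x + -δ * z) / δ| / |x - (x + -δ * z)| ^ (p + 1))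
      = ENNReal.ofReal (δ ^ (-(p + 1))) * ENNReal.ofReal (phi |z| / |z| ^ (p + 1)) := by
    intro z
    rw [← ENNReal.ofReal_mul (by positivity), show x - (x + -δ * z) = δ * z by ring,
      show x / δ - (x + -δ * z) / δ = z by field_simp; ring, abs_mul, abs_of_pos hδ,
      Real.mul_rpow hδ.le (abs_nonneg z), Real.rpow_neg hδ.le]
    congr 1
    ring
  have hchange := lintegral_comp_affine x (neg_ne_zero.2 hδ.ne')
    (fun y => ENNReal.ofReal (phi |x / δ - y / δ| / |x - y| ^ (p + 1)))
  simp only [hsub, lintegral_const_mul' _ _ ENNReal.ofReal_ne_top] at hchange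
  rw [inv_neg, abs_neg, abs_of_pos (inv_pos.2 hδ)] at hchange
  calc ∫⁻ y, ENNReal.ofReal (phi |x / δ - y / δ| / |x - y| ^ (p + 1))
      = ENNReal.ofReal δ * (ENNReal.ofReal δ⁻¹ *
          ∫⁻ y, ENNReal.ofReal (phi |x / δ - y / δ| / |x - y| ^ (p + 1))) := by
        rw [← mul_assoc, ← ENNReal.ofReal_mul hδ.le, mul_inv_cancel₀ hδ.ne', ENNReal.ofReal_one,
          one_mul]
    _ = ENNReal.ofReal (δ ^ (-p)) * ∫⁻ z, ENNReal.ofReal (phi |z| / |z| ^ (p + 1)) := by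
        rw [← hchange, ← mul_assoc, ← ENNReal.ofReal_mul hδ.le, neg_add, Real.rpow_add hδ,
          Real.rpow_neg_one]
        congr 2
        field_simp

lemma lamD_id_le_one {phi : ℝ → ℝ} {p : ℝ} (hnn : ∀ t, 0 ≤ t → 0 ≤ phi t)
    (hnorm : ∫ t in Ioi (0:ℝ), phi t / t ^ (p + 1) = 1 / 2) {δ : ℝ} (hδ : 0 < δ) :
    LamD phi p δ (Ioo 0 1) (fun x => x) ≤ 1 := by
  unfold LamD Lam
  calc ENNReal.ofReal (δ ^ p) * ∫⁻ x in Ioo 0 1, ∫⁻ y in Ioo 0 1,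
        ENNReal.ofReal (phi |x / δ - y / δ| / |x - y| ^ (p + 1))
      ≤ ENNReal.ofReal (δ ^ p) * ∫⁻ _ in Ioo (0:ℝ) 1, ENNReal.ofReal (δ ^ (-p)) := by
        gcongr with x
        calc _ ≤ _ := setLIntegral_le_lintegral _ _
          _ = _ := by
            rw [lintegral_lam_kernel_id phi p hδ x, lintegral_phi_abs_div_rpow_eq_one hnn hnorm,
              mul_one]
    _ = 1 := by
      rw [setLIntegral_const, Real.volume_Ioo, sub_zero, ENNReal.ofReal_one, mul_one,
        ← ENNReal.ofReal_mul (by positivity), ← Real.rpow_add hδ, add_neg_cancel,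
        Real.rpow_zero, ENNReal.ofReal_one]

lemma memLp_id_Ioo (q : ℝ≥0∞) {a b : ℝ} : MemLp (fun x : ℝ => x) q (volume.restrict (Ioo a b)) := by
  refine MemLp.of_bound measurable_id.aestronglyMeasurable (max |a| |b|) ?_
  filter_upwards [ae_restrict_mem measurableSet_Ioo] with x hx
  exact abs_le_max_abs_abs hx.1.le hx.2.le

lemma kapp_le_one {phi : ℝ → ℝ} {p : ℝ} (hnn : ∀ t, 0 ≤ t → 0 ≤ phi t)
    (hnorm : ∫ t in Ioi (0:ℝ), phi t / t ^ (p + 1) = 1 / 2) :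
    kapp phi p ≤ 1 := by
  refine iInf₂_le_of_le (fun _ x => x) ⟨fun _ _ => memLp_id_Ioo _, by simp⟩ ?_
  have h : ∃ᶠ δ in 𝓝[>] (0:ℝ), LamD phi p δ (Ioo 0 1) (fun x => x) ≤ 1 :=
    Eventually.frequently <| by
      filter_upwards [self_mem_nhdsWithin] with δ hδ using lamD_id_le_one hnn hnorm hδ
  exact liminf_le_of_frequently_le' h

lemma lam_congr {phi : ℝ → ℝ} {p : ℝ} {I : Set ℝ} {u w : ℝ → ℝ}
    (h : ∀ x y, |u x - u y| = |w x - w y|) : Lam phi p I u = Lam phi p I w := by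
  simp only [Lam, h]

lemma lamD_mul_add (phi : ℝ → ℝ) (p : ℝ) {δ k : ℝ} (hδ : 0 < δ) (hk : k ≠ 0) (I : Set ℝ)
    (v : ℝ → ℝ) (m : ℝ) :
    LamD phi p δ I (fun x => k * v x + m)
      = ENNReal.ofReal (|k| ^ p) * LamD phi p (δ / |k|) I v := by
  have hk' : 0 < |k| := abs_pos.2 hk
  have habs : ∀ x y,
      |(k * v x + m) / δ - (k * v y + m) / δ| = |v x / (δ / |k|) - v y / (δ / |k|)| := by
    intro x y
    rw [show (k * v x + m) / δ - (k * v y + m) / δ = k * (v x - v y) / δ by ring,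
      show v x / (δ / |k|) - v y / (δ / |k|) = |k| * (v x - v y) / δ by field_simp,
      abs_div, abs_div, abs_mul, abs_mul, abs_abs]
  unfold LamD
  rw [lam_congr habs, ← mul_assoc, ← ENNReal.ofReal_mul (by positivity),
    Real.div_rpow hδ.le hk'.le, mul_div_cancel₀ _ (Real.rpow_pos_of_pos hk' p).ne']

lemma lam_Ioo_eq {a b : ℝ} (hab : a < b) (phi : ℝ → ℝ) (p : ℝ) (u : ℝ → ℝ) :
    Lam phi p (Ioo a b) u
      = ENNReal.ofReal ((b - a) ^ (1 - p))
          * Lam phi p (Ioo 0 1) (fun s => u (a + (b - a) * s)) := by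
  have hL : 0 < b - a := sub_pos.2 hab
  obtain ⟨K, hK⟩ : ∃ K : ℝ → ℝ → ℝ≥0∞,
      K = fun x y => ENNReal.ofReal (phi |u x - u y| / |x - y| ^ (p + 1)) := ⟨_, rfl⟩
  have hKA : ∀ s t,
      ENNReal.ofReal (phi |u (a + (b - a) * s) - u (a + (b - a) * t)| / |s - t| ^ (p + 1))
        = ENNReal.ofReal ((b - a) ^ (p + 1)) * K (a + (b - a) * s) (a + (b - a) * t) := by
    intro s t
    rw [hK, ← ENNReal.ofReal_mul (by positivity),
      show a + (b - a) * s - (a + (b - a) * t) = (b - a) * (s - t) by ring,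
      abs_mul, abs_of_pos hL, Real.mul_rpow hL.le (abs_nonneg _)]
    congr 1
    field_simp
  have hconst : ENNReal.ofReal ((b - a) ^ (1 - p)) * ENNReal.ofReal ((b - a) ^ (p + 1))
      * ENNReal.ofReal (b - a)⁻¹ * ENNReal.ofReal (b - a)⁻¹ = 1 := by
    rw [← ENNReal.ofReal_mul (by positivity), ← ENNReal.ofReal_mul (by positivity),
      ← ENNReal.ofReal_mul (by positivity), ← Real.rpow_add hL,
      show 1 - p + (p + 1) = (2 : ℕ) by push_cast; ring, Real.rpow_natCast, ← ENNReal.ofReal_one]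
    congr 1
    field_simp
  have hLam : Lam phi p (Ioo a b) u = ∫⁻ x in Ioo a b, ∫⁻ y in Ioo a b, K x y := by rw [hK]; rfl
  rw [hLam, Lam]
  simp_rw [hKA, lintegral_const_mul' _ _ ENNReal.ofReal_ne_top,
    setLIntegral_Ioo_comp_affine hab (K _)]
  rw [lintegral_const_mul' _ _ ENNReal.ofReal_ne_top,
    setLIntegral_Ioo_comp_affine hab (fun x => ∫⁻ y in Ioo a b, K x y)]
  simp only [← mul_assoc, hconst, one_mul]

lemma lamD_Ioo_eq {a b : ℝ} (hab : a < b) (phi : ℝ → ℝ) (p δ : ℝ) (u : ℝ → ℝ) :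
    LamD phi p δ (Ioo a b) u
      = ENNReal.ofReal ((b - a) ^ (1 - p))
          * LamD phi p δ (Ioo 0 1) (fun s => u (a + (b - a) * s)) := by
  unfold LamD
  rw [lam_Ioo_eq hab]
  ring

/-- The rescaling of `f` from `(a, b)` to `(0, 1)` under which the affine function `c y + d`
becomes the identity. -/
noncomputable def blowUp (f : ℝ → ℝ) (a b c d : ℝ) : ℝ → ℝ :=
  fun s => (f (a + (b - a) * s) - (c * a + d)) / (c * (b - a))

section blowUp

variable {f : ℝ → ℝ} {a b c d : ℝ}

lemma blowUp_sub_self (hab : a < b) (hc : c ≠ 0) (s : ℝ) :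
    blowUp f a b c d s - s
      = (f (a + (b - a) * s) - (c * (a + (b - a) * s) + d)) / (c * (b - a)) := by
  have := (sub_pos.2 hab).ne'
  unfold blowUp
  field_simp
  ring

lemma memLp_blowUp {q : ℝ≥0∞} (hab : a < b) (hf : MemLp f q (volume.restrict (Ioo a b))) :
    MemLp (blowUp f a b c d) q (volume.restrict (Ioo 0 1)) := by
  unfold blowUp
  simp only [div_eq_inv_mul]
  exact ((hf.comp_affine_Ioo hab).sub (memLp_const _)).const_mul _

lemma integral_abs_blowUp_sub_rpow (hab : a < b) (hc : c ≠ 0) (p : ℝ) :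
    ∫ s in Ioo 0 1, |blowUp f a b c d s - s| ^ p
      = ((b - a)⁻¹ * ∫ y in Ioo a b, |f y - (c * y + d)| ^ p) / (|c| ^ p * (b - a) ^ p) := by
  have hL := sub_pos.2 hab
  simp_rw [blowUp_sub_self hab hc, abs_div, Real.div_rpow (abs_nonneg _) (abs_nonneg _),
    integral_div, abs_mul, abs_of_pos hL, Real.mul_rpow (abs_nonneg c) hL.le]
  rw [setIntegral_Ioo_comp_affine hab (fun y => |f y - (c * y + d)| ^ p)]

lemma lamD_blowUp (phi : ℝ → ℝ) (p : ℝ) {δ : ℝ} (hab : a < b) (hc : c ≠ 0) (hδ : 0 < δ) :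
    LamD phi p δ (Ioo a b) f
      = ENNReal.ofReal (|c| ^ p * (b - a))
          * LamD phi p (δ / (|c| * (b - a))) (Ioo 0 1) (blowUp f a b c d) := by
  have hL := sub_pos.2 hab
  have hf : (fun s => f (a + (b - a) * s))
      = fun s => (c * (b - a)) * blowUp f a b c d s + (c * a + d) := by
    funext s
    unfold blowUp
    field_simp
    ring
  rw [lamD_Ioo_eq hab, hf, lamD_mul_add phi p hδ (mul_ne_zero hc hL.ne'), abs_mul, abs_of_pos hL,
    ← mul_assoc, ← ENNReal.ofReal_mul (by positivity), Real.mul_rpow (abs_nonneg c) hL.le]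
  congr 2
  rw [Real.rpow_sub hL, Real.rpow_one]
  field_simp

end blowUp

lemma exists_unit_interval_lamD_lt (phi : ℝ → ℝ) {p a b c d δ d1 d2 : ℝ} {f : ℝ → ℝ} {X : ℝ≥0∞}
    (hab : a < b) (hf : MemLp f (ENNReal.ofReal p) (volume.restrict (Ioo a b)))
    (hclose : (b - a)⁻¹ * ∫ y in Ioo a b, |f y - (c * y + d)| ^ p < d1 * |c| ^ p * (b - a) ^ p)
    (hδ : 0 < δ) (hδd2 : δ < d2 * |c| * (b - a))
    (hlt : LamD phi p δ (Ioo a b) f < X * ENNReal.ofReal (|c| ^ p * (b - a))) :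
    ∃ δ' v, 0 < δ' ∧ δ' < d2 ∧ MemLp v (ENNReal.ofReal p) (volume.restrict (Ioo 0 1)) ∧
      ∫ s in Ioo 0 1, |v s - s| ^ p < d1 ∧ LamD phi p δ' (Ioo 0 1) v < X := by
  have hL := sub_pos.2 hab
  have hc : c ≠ 0 := by
    rintro rfl
    simp only [abs_zero, mul_zero, zero_mul] at hδd2
    linarith
  have hcL : 0 < |c| * (b - a) := mul_pos (abs_pos.2 hc) hL
  refine ⟨δ / (|c| * (b - a)), blowUp f a b c d, div_pos hδ hcL, ?_, memLp_blowUp hab hf, ?_, ?_⟩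
  · rwa [div_lt_iff₀ hcL, ← mul_assoc]
  · rwa [integral_abs_blowUp_sub_rpow hab hc, div_lt_iff₀ (by positivity), ← mul_assoc]
  · rw [lamD_blowUp phi p hab hc hδ, mul_comm] at hlt
    exact (ENNReal.mul_lt_mul_iff_left (by positivity) ENNReal.ofReal_ne_top).1 hlt

lemma tendsto_eLpNorm_of_tendsto_integral {α : Type*} [MeasurableSpace α] {μ : Measure α}
    {p : ℝ} (hp : 0 < p) {g : ℕ → α → ℝ} (hg : ∀ n, MemLp (g n) (ENNReal.ofReal p) μ)
    (h : Tendsto (fun n => ∫ x, |g n x| ^ p ∂μ) atTop (𝓝 0)) :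
    Tendsto (fun n => eLpNorm (g n) (ENNReal.ofReal p) μ) atTop (𝓝 0) := by
  have hp' : ENNReal.ofReal p ≠ 0 := by simpa using hp
  simp_rw [fun n => (hg n).eLpNorm_eq_integral_rpow_norm hp' ENNReal.ofReal_ne_top,
    ENNReal.toReal_ofReal hp.le, Real.norm_eq_abs]
  simpa [Real.zero_rpow (inv_pos.2 hp).ne'] using
    ENNReal.tendsto_ofReal (h.rpow_const (Or.inr (inv_pos.2 hp).le))

lemma exists_tendstoLp_of_seq {p : ℝ} {I : Set ℝ} {u : ℝ → ℝ} {δ : ℕ → ℝ} {v : ℕ → ℝ → ℝ}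
    (hδ : ∀ n, 0 < δ n) (hu : MemLp u (ENNReal.ofReal p) (volume.restrict I))
    (hv : ∀ n, MemLp (v n) (ENNReal.ofReal p) (volume.restrict I))
    (hvu : Tendsto (fun n => eLpNorm (v n - u) (ENNReal.ofReal p) (volume.restrict I))
      atTop (𝓝 0)) :
    ∃ w : ℝ → ℝ → ℝ, TendstoLp p I w u ∧ ∀ n, ∃ m, δ m = δ n ∧ w (δ n) = v m := by
  classical
  let w : ℝ → ℝ → ℝ := fun x => if h : ∃ n, δ n = x then v (Nat.find h) else u
  have hw_of_not : ∀ x, (¬ ∃ n, δ n = x) → w x = u := fun x h => dif_neg h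
  -- `w x` is `v m` for the least `m` with `δ m = x`; as every `δ m` is positive, that `m` is
  -- large when `x` is small.
  have hfirst : ∀ N, ∀ᶠ x in 𝓝[>] (0:ℝ), ∀ m ∈ Iio N, δ m ≠ x := fun N =>
    (eventually_all_finite (finite_Iio N)).2 fun m _ =>
      ((eventually_ne_nhds (hδ m).ne).filter_mono nhdsWithin_le_nhds).mono fun _ h => h.symm
  refine ⟨w, ⟨fun x _ => ?_, ?_⟩, fun n =>
    ⟨_, Nat.find_spec (⟨n, rfl⟩ : ∃ m, δ m = δ n), dif_pos ⟨n, rfl⟩⟩⟩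
  · by_cases h : ∃ n, δ n = x
    · simp only [w, dif_pos h, hv]
    · rw [hw_of_not x h]; exact hu
  · rw [ENNReal.tendsto_nhds_zero] at hvu ⊢
    intro ε hε
    obtain ⟨N, hN⟩ := eventually_atTop.1 (hvu ε hε)
    filter_upwards [hfirst N] with x hx
    by_cases h : ∃ n, δ n = x
    · simp only [w, dif_pos h]
      exact hN _ (Nat.le_find_iff _ _ |>.2 fun m hm => hx m hm)
    · simp [hw_of_not x h]

lemma kapp_le_of_tendsto {phi : ℝ → ℝ} {p : ℝ} (hp : 0 < p) {δ : ℕ → ℝ} {v : ℕ → ℝ → ℝ}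
    {X : ℝ≥0∞} (hδpos : ∀ n, 0 < δ n) (hδ : Tendsto δ atTop (𝓝 0))
    (hv : ∀ n, MemLp (v n) (ENNReal.ofReal p) (volume.restrict (Ioo 0 1)))
    (hclose : Tendsto (fun n => ∫ s in Ioo 0 1, |v n s - s| ^ p) atTop (𝓝 0))
    (hX : ∀ n, LamD phi p (δ n) (Ioo 0 1) (v n) ≤ X) :
    kapp phi p ≤ X := by
  obtain ⟨w, hw, hwδ⟩ := exists_tendstoLp_of_seq hδpos (memLp_id_Ioo _) hv
    (tendsto_eLpNorm_of_tendsto_integral hp (fun n => (hv n).sub (memLp_id_Ioo _)) hclose)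
  refine iInf₂_le_of_le w hw ?_
  have hδ' : Tendsto δ atTop (𝓝[>] 0) := tendsto_nhdsWithin_iff.2 ⟨hδ, .of_forall hδpos⟩
  have hfreq : ∃ᶠ x in 𝓝[>] (0:ℝ), LamD phi p x (Ioo 0 1) (w x) ≤ X :=
    hδ'.frequently <| .of_forall fun n => by
      obtain ⟨m, hm, hwm⟩ := hwδ n
      rw [hwm, ← hm]
      exact hX m
  exact liminf_le_of_frequently_le' hfreq

theorem claim_2_general (p α β : ℝ) (hp : 1 ≤ p)
    (phi : ℝ → ℝ) (hphi : PhiOK phi p α β) :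
    ∀ ε : ℝ, 0 < ε → ∃ d1 : ℝ, 0 < d1 ∧ ∃ d2 : ℝ, 0 < d2 ∧
      ∀ c d a b : ℝ, a < b →
      ∀ f : ℝ → ℝ, MemLp f (ENNReal.ofReal p) (volume.restrict (Ioo a b)) →
      ((b - a)⁻¹ * ∫ y in Ioo a b, |f y - (c * y + d)| ^ p)
        < d1 * |c| ^ p * (b - a) ^ p →
      ∀ δ : ℝ, 0 < δ → δ < d2 * |c| * (b - a) →
      (kapp phi p - ENNReal.ofReal ε) * ENNReal.ofReal (|c| ^ p * (b - a))
        ≤ LamD phi p δ (Ioo a b) f := by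
  obtain ⟨-, hnn, -, -, -, hnorm⟩ := hphi
  intro ε hε
  by_contra! hfail
  have hseq : ∀ n : ℕ, ∃ (δ : ℝ) (v : ℝ → ℝ), 0 < δ ∧ δ < 1 / ((n : ℝ) + 1) ∧
      MemLp v (ENNReal.ofReal p) (volume.restrict (Ioo 0 1)) ∧
      ∫ s in Ioo 0 1, |v s - s| ^ p < 1 / ((n : ℝ) + 1) ∧
      LamD phi p δ (Ioo 0 1) v < kapp phi p - ENNReal.ofReal ε := fun n => by
    obtain ⟨c, d, a, b, hab, f, hf, hclose, δ, hδ, hδd2, hlt⟩ :=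
      hfail _ Nat.one_div_pos_of_nat _ Nat.one_div_pos_of_nat
    exact exists_unit_interval_lamD_lt phi hab hf hclose hδ hδd2 hlt
  choose δ v hδpos hδlt hv hclose hlt using hseq
  have hκ : kapp phi p ≤ kapp phi p - ENNReal.ofReal ε :=
    kapp_le_of_tendsto (by linarith) hδpos
      (squeeze_zero (fun n => (hδpos n).le) (fun n => (hδlt n).le)
        tendsto_one_div_add_atTop_nhds_zero_nat) hv
      (squeeze_zero (fun n => integral_nonneg fun s => by positivity) (fun n => (hclose n).le)
        tendsto_one_div_add_atTop_nhds_zero_nat) fun n => (hlt n).le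
  have hκ0 : kapp phi p ≠ 0 := fun h => by simpa [h] using hlt 0
  exact (ENNReal.sub_lt_self (ne_top_of_le_ne_top ENNReal.one_ne_top (kapp_le_one hnn hnorm))
    hκ0 (by simpa using hε)).not_ge hκ

/-- Claim 2: scaled lower bound near an affine function. -/
theorem claim_2 (p α β : ℝ) (hp : 1 ≤ p) (hα : 0 < α) (hβ : 0 < β)
    (phi : ℝ → ℝ) (hphi : PhiOK phi p α β) :
    ∀ ε : ℝ, 0 < ε → ∃ d1 : ℝ, 0 < d1 ∧ ∃ d2 : ℝ, 0 < d2 ∧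
      ∀ c d a b : ℝ, a < b →
      ∀ f : ℝ → ℝ, MemLp f (ENNReal.ofReal p) (volume.restrict (Ioo a b)) →
      ((b - a)⁻¹ * ∫ y in Ioo a b, |f y - (c * y + d)| ^ p)
        < d1 * |c| ^ p * (b - a) ^ p →
      ∀ δ : ℝ, 0 < δ → δ < d2 * |c| * (b - a) →
      (kapp phi p - ENNReal.ofReal ε) * ENNReal.ofReal (|c| ^ p * (b - a))
        ≤ LamD phi p δ (Ioo a b) f :=
  claim_2_general p α β hp phi hphi
end
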